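/- arXiv:2403.05656 — 9 statements merged into one kernel-verified Lean document; each statement's English description precedes it below -/
import Mathlib

section
/- If M and N are R-modules such that the canonical map from L(M) × L(N) to L(M ⊕ N) sending (M', N') to M' ⊕ N' is surjective (i.e., every submodule of M ⊕ N is of the form M' ⊕ N'), then for every submodule M' ≤ M and N' ≤ N, Hom_R(M', N) = 0 and Hom_R(N', M) = 0. -/
/-!
If `f : M' → N` is linear, its graph `{(m, f m)}` is a submodule of `M × N`. Were it of the form
`A × B`, then `(m, 0) ∈ A × B` would lie on the graph too, forcing `f m = 0`. The case of
`N' → M` follows by swapping the factors.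
-/

section

variable {R M N P : Type*} [Ring R] [AddCommGroup M] [Module R M] [AddCommGroup N] [Module R N]
  [AddCommGroup P] [Module R P]

theorem LinearMap.eq_zero_of_range_prod_eq_prod {i : P →ₗ[R] M} (hi : Function.Injective i)
    (f : P →ₗ[R] N) (h : ∃ (A : Submodule R M) (B : Submodule R N), range (i.prod f) = A.prod B) :
    f = 0 := by
  obtain ⟨A, B, hAB⟩ := h
  ext x
  have hx : (i x, f x) ∈ A.prod B := hAB ▸ mem_range_self (i.prod f) x
  have hx0 : (i x, (0 : N)) ∈ range (i.prod f) := hAB ▸ ⟨hx.1, B.zero_mem⟩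
  obtain ⟨y, hy⟩ := hx0
  obtain ⟨hiy, hfy⟩ := Prod.ext_iff.mp hy
  simpa [hi hiy] using hfy

theorem Submodule.exists_eq_prod_swap
    (h : ∀ L : Submodule R (M × N), ∃ (A : Submodule R M) (B : Submodule R N), L = A.prod B)
    (L : Submodule R (N × M)) : ∃ (B : Submodule R N) (A : Submodule R M), L = B.prod A := by
  obtain ⟨A, B, hAB⟩ := h (L.comap (LinearEquiv.prodComm R M N).toLinearMap)
  refine ⟨B, A, SetLike.ext fun ⟨n, m⟩ => ?_⟩
  simpa [and_comm] using SetLike.ext_iff.mp hAB (m, n)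

end

/-- If every submodule of `M × N` is of the form `M' × N'` (i.e. the canonical map
`L(M) × L(N) → L(M ⊕ N)` is surjective), then `M` and `N` are orthocyclic:
`Hom_R(M', N) = 0` and `Hom_R(N', M) = 0` for all submodules `M' ≤ M`, `N' ≤ N`. -/
theorem stmt_0 {R M N : Type*} [Ring R] [AddCommGroup M] [Module R M]
    [AddCommGroup N] [Module R N]
    (h : ∀ L : Submodule R (M × N), ∃ (M' : Submodule R M) (N' : Submodule R N),
      L = M'.prod N') :
    ∀ (M' : Submodule R M) (N' : Submodule R N),
      (∀ f : M' →ₗ[R] N, f = 0) ∧ (∀ g : N' →ₗ[R] M, g = 0) :=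
  fun M' N' =>
    ⟨fun f => LinearMap.eq_zero_of_range_prod_eq_prod M'.injective_subtype f (h _),
      fun g => LinearMap.eq_zero_of_range_prod_eq_prod N'.injective_subtype g
        (Submodule.exists_eq_prod_swap h _)⟩
end

section
/- Let M be a semisimple R-module, S a simple R-module, and t ≥ 1. If no simple direct summand of M is isomorphic to S, then every submodule L of M ⊕ S^t equals M' ⊕ N' for some submodules M' ≤ M and N' ≤ S^t. -/
/-!
A semisimple submodule is the sum of its simple submodules, so it suffices to show that every
simple submodule `W` of `M × S^t` lies in `M × 0` or in `0 × S^t`. If the second projection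
does not vanish on `W`, some coordinate projection `W → S` is nonzero, hence an isomorphism by
Schur's lemma. If moreover the first projection does not vanish on `W`, it embeds `W ≅ S` into
`M` as a simple submodule, which is a direct summand since `M` is semisimple: excluded by
hypothesis.
-/

open LinearMap

section

variable {R M N : Type*} [Ring R] [AddCommGroup M] [Module R M] [AddCommGroup N] [Module R N]

instance [IsSemisimpleModule R M] [IsSemisimpleModule R N] : IsSemisimpleModule R (M × N) := by
  have := IsSemisimpleModule.sup (.range (inl R M N)) (.range (inr R M N))
  rw [sup_range_inl_inr] at this
  exact .congr Submodule.topEquiv.symm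

theorem Submodule.prod_comap_inl_comap_inr_le (L : Submodule R (M × N)) :
    (L.comap (inl R M N)).prod (L.comap (inr R M N)) ≤ L := by
  rintro ⟨x, y⟩ ⟨hx, hy⟩
  simpa using L.add_mem hx hy

theorem Submodule.eq_prod_of_forall_simple_le_ker [IsSemisimpleModule R (M × N)]
    (L : Submodule R (M × N))
    (hL : ∀ W ≤ L, IsSimpleModule R W → W ≤ LinearMap.ker (LinearMap.snd R M N) ∨
      W ≤ LinearMap.ker (LinearMap.fst R M N)) :
    L = (L.comap (inl R M N)).prod (L.comap (inr R M N)) := by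
  refine le_antisymm ?_ L.prod_comap_inl_comap_inr_le
  refine (IsSemisimpleModule.sSup_simples_le L).ge.trans (sSup_le fun W ⟨hW, hWL⟩ ↦ ?_)
  rintro ⟨x, y⟩ hxy
  have hxyL : (x, y) ∈ L := hWL hxy
  rcases hL W hWL hW with hsnd | hfst
  · obtain rfl : y = 0 := hsnd hxy
    exact ⟨hxyL, L.zero_mem⟩
  · obtain rfl : x = 0 := hfst hxy
    exact ⟨L.zero_mem, hxyL⟩

end

section

variable {R M S : Type*} [Ring R] [AddCommGroup M] [Module R M] [AddCommGroup S] [Module R S]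
  [IsSimpleModule R S]

theorem LinearMap.nonempty_linearEquiv_of_pi_ne_zero [IsSimpleModule R M] {ι : Type*}
    {f : M →ₗ[R] ι → S} (hf : f ≠ 0) : Nonempty (M ≃ₗ[R] S) := by
  obtain ⟨i, hi⟩ : ∃ i, proj i ∘ₗ f ≠ 0 := by
    contrapose! hf
    ext x i
    exact congr($(hf i) x)
  exact ⟨.ofBijective _ (bijective_of_ne_zero hi)⟩

theorem le_ker_snd_or_le_ker_fst_of_isSimpleModule [IsSemisimpleModule R M] {ι : Type*}
    (h : ∀ T : Submodule R M, IsSimpleModule R T → (∃ T', IsCompl T T') →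
      ¬ Nonempty (T ≃ₗ[R] S))
    (W : Submodule R (M × (ι → S))) [IsSimpleModule R W] :
    W ≤ ker (snd R M (ι → S)) ∨ W ≤ ker (fst R M (ι → S)) := by
  simp only [le_ker_iff_comp_subtype_eq_zero]
  refine or_iff_not_imp_left.mpr fun hsnd ↦ ?_
  obtain ⟨eS⟩ := nonempty_linearEquiv_of_pi_ne_zero hsnd
  by_contra hfst
  let eW := LinearEquiv.ofInjective _ (injective_of_ne_zero hfst)
  exact h _ (.congr eW.symm) (exists_isCompl _) ⟨eW.symm.trans eS⟩

end

theorem stmt_4_general {R M S : Type*} [Ring R] [AddCommGroup M] [Module R M]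
    [AddCommGroup S] [Module R S] [IsSemisimpleModule R M] [IsSimpleModule R S]
    (t : ℕ)
    (h : ∀ T : Submodule R M, IsSimpleModule R T → (∃ T', IsCompl T T') →
      ¬ Nonempty (T ≃ₗ[R] S)) :
    ∀ L : Submodule R (M × (Fin t → S)),
      ∃ (M' : Submodule R M) (N' : Submodule R (Fin t → S)), L = M'.prod N' :=
  fun L ↦ ⟨_, _, L.eq_prod_of_forall_simple_le_ker fun W _ _ ↦
    le_ker_snd_or_le_ker_fst_of_isSimpleModule h W⟩

/-- Let `M` be semisimple, `S` simple, `t ≥ 1`. If no simple direct summand of `M`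
is isomorphic to `S`, then every submodule of `M ⊕ S^t` is of the form `M' ⊕ N'`
with `M' ≤ M` and `N' ≤ S^t`. -/
theorem stmt_4 {R M S : Type*} [Ring R] [AddCommGroup M] [Module R M]
    [AddCommGroup S] [Module R S] [IsSemisimpleModule R M] [IsSimpleModule R S]
    (t : ℕ) (ht : 1 ≤ t)
    (h : ∀ T : Submodule R M, IsSimpleModule R T → (∃ T', IsCompl T T') →
      ¬ Nonempty (T ≃ₗ[R] S)) :
    ∀ L : Submodule R (M × (Fin t → S)),
      ∃ (M' : Submodule R M) (N' : Submodule R (Fin t → S)), L = M'.prod N' :=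
  stmt_4_general t h
end

section
/- Let S be a simple R-module such that End_R(S) is finite with q elements, and let t ≥ 1. Then the number of simple submodules of S^t equals 1 + q + q² + ... + q^{t-1} = (q^t − 1)/(q − 1). -/
/-!
A nonzero map `S → S^t` is injective, so its image is simple; conversely every simple submodule
of `S^t` is such an image, because some coordinate projection restricts to an isomorphism onto
`S`. Writing `Hom(S, S^t) = D^t` with `D = End(S)`, two nonzero maps have the same image iff they
differ by precomposition with a unit of `D`, i.e. by the right `D`-action. Hence the simple
submodules of `S^t` are the points of the projective space of `D^t` over `Dᵐᵒᵖ`, of which there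
are `(q^t - 1)/(q - 1)`.
-/

open LinearMap Projectivization
open scoped LinearAlgebra.Projectivization

namespace Projectivization

lemma card_eq_geom_sum {K V : Type*} [DivisionRing K] [AddCommGroup V] [Module K V] [Finite K]
    {n : ℕ} (h : Nat.card V = Nat.card K ^ n) :
    Nat.card (ℙ K V) = ∑ i ∈ Finset.range n, Nat.card K ^ i := by
  have hK : 1 < Nat.card K := Finite.one_lt_card
  rw [Nat.geomSum_eq hK, ← h, card K V, Nat.mul_div_cancel _ (by omega)]

end Projectivization

section

variable {R S M : Type*} [Ring R] [AddCommGroup S] [Module R S] [AddCommGroup M] [Module R M]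

theorem LinearMap.isSimpleModule_range [IsSimpleModule R S] {f : S →ₗ[R] M} (hf : f ≠ 0) :
    IsSimpleModule R (range f) :=
  .congr (LinearEquiv.ofInjective f (f.injective_of_ne_zero hf)).symm

theorem LinearMap.exists_linearEquiv_comp_eq_of_range_eq {f g : S →ₗ[R] M}
    (hf : Function.Injective f) (hg : Function.Injective g) (h : range f = range g) :
    ∃ e : S ≃ₗ[R] S, g = f ∘ₗ e := by
  refine ⟨(LinearEquiv.ofInjective g hg).trans
    ((LinearEquiv.ofEq _ _ h.symm).trans (LinearEquiv.ofInjective f hf).symm), ?_⟩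
  ext x
  simp

end

section

variable {R S ι : Type*} [Ring R] [AddCommGroup S] [Module R S]

theorem LinearMap.pi_mulOpposite_smul (c : (Module.End R S)ᵐᵒᵖ) (v : ι → Module.End R S) :
    pi (c • v) = pi v ∘ₗ c.unop :=
  rfl

theorem LinearMap.pi_ne_zero {v : ι → Module.End R S} (hv : v ≠ 0) : pi v ≠ 0 :=
  fun h ↦ hv (funext ((pi_eq_zero v).1 h))

theorem exists_range_pi_eq [IsSimpleModule R S] (T : Submodule R (ι → S))
    [IsSimpleModule R T] : ∃ v : ι → Module.End R S, range (pi v) = T := by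
  have := IsSimpleModule.nontrivial R T
  obtain ⟨x, hx⟩ := exists_ne (0 : T)
  obtain ⟨i, hi⟩ := Function.ne_iff.mp (mt Submodule.coe_eq_zero.mp hx)
  have hproj : proj i ∘ₗ T.subtype ≠ 0 := fun h ↦ hi (LinearMap.congr_fun h x)
  let e : T ≃ₗ[R] S := .ofBijective _ (bijective_of_ne_zero hproj)
  refine ⟨fun j ↦ proj j ∘ₗ T.subtype ∘ₗ e.symm.toLinearMap, ?_⟩
  have hpi : pi (fun j ↦ proj j ∘ₗ T.subtype ∘ₗ e.symm.toLinearMap) =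
      T.subtype ∘ₗ e.symm.toLinearMap := rfl
  rw [hpi, range_comp_of_range_eq_top _ e.symm.range, Submodule.range_subtype]

variable [IsSimpleModule R S] [DecidableEq (Module.End R S)]

noncomputable def projectivizationEquivSimpleSubmodule :
    ℙ (Module.End R S)ᵐᵒᵖ (ι → Module.End R S) ≃
      {T : Submodule R (ι → S) // IsSimpleModule R T} := by
  refine .ofBijective (Projectivization.lift
    (fun v ↦ ⟨range (pi v.1), isSimpleModule_range (pi_ne_zero v.2)⟩) ?_) ⟨?_, ?_⟩
  · rintro ⟨a, ha⟩ ⟨b, hb⟩ c (rfl : a = c • b)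
    have hc : c.unop ≠ 0 := by
      rintro h
      rw [MulOpposite.unop_eq_zero_iff] at h
      exact ha (h ▸ zero_smul _ b)
    refine Subtype.ext ?_
    change range (pi (c • b)) = range (pi b)
    rw [pi_mulOpposite_smul]
    exact range_comp_of_range_eq_top (pi b) (range_eq_top.2 (bijective_of_ne_zero hc).2)
  · intro x y hxy
    induction x with | h v hv => induction y with | h w hw =>
    obtain ⟨e, he⟩ := exists_linearEquiv_comp_eq_of_range_eq
      (injective_of_ne_zero (pi_ne_zero hw)) (injective_of_ne_zero (pi_ne_zero hv))
      (congrArg Subtype.val hxy).symm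
    refine (mk_eq_mk_iff' _ _ _ hv hw).2 ⟨.op e, funext fun i ↦ ?_⟩
    rw [← proj_pi v i, he, ← proj_pi (MulOpposite.op (e : Module.End R S) • w) i, pi_mulOpposite_smul]
    rfl
  · rintro ⟨T, hT⟩
    obtain ⟨v, hv⟩ := exists_range_pi_eq T
    have hv0 : v ≠ 0 := by
      rintro rfl
      rw [(pi_eq_zero (0 : ι → Module.End R S)).2 fun _ ↦ rfl, range_zero] at hv
      exact ((isSimpleModule_iff_isAtom).1 hT).1 hv.symm
    exact ⟨mk _ v hv0, Subtype.ext hv⟩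

end

theorem stmt_9_general {R S : Type*} [Ring R] [AddCommGroup S] [Module R S]
    [IsSimpleModule R S] [Finite (Module.End R S)] (q t : ℕ)
    (hq : Nat.card (Module.End R S) = q) :
    Nat.card {T : Submodule R (Fin t → S) // IsSimpleModule R T} =
      ∑ i ∈ Finset.range t, q ^ i := by
  classical
  have : Finite (Module.End R S)ᵐᵒᵖ := .of_equiv _ MulOpposite.opEquiv
  have hop : Nat.card (Module.End R S)ᵐᵒᵖ = q := by
    rw [Nat.card_congr MulOpposite.opEquiv.symm, hq]
  rw [← Nat.card_congr projectivizationEquivSimpleSubmodule, ← hop]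
  exact card_eq_geom_sum (by rw [Nat.card_fun, Nat.card_fin, hop, hq])

/-- Let `S` be a simple `R`-module whose endomorphism ring is finite with `q`
elements, and `t ≥ 1`. Then the number of simple submodules of `S^t` equals
`1 + q + q² + ⋯ + q^{t-1}`. -/
theorem stmt_9 {R S : Type*} [Ring R] [AddCommGroup S] [Module R S]
    [IsSimpleModule R S] [Finite (Module.End R S)] (q t : ℕ)
    (hq : Nat.card (Module.End R S) = q) (ht : 1 ≤ t) :
    Nat.card {T : Submodule R (Fin t → S) // IsSimpleModule R T} =
      ∑ i ∈ Finset.range t, q ^ i :=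
  stmt_9_general q t hq
end

section
/- Let M be a finite-length R-module whose lattice of submodules L(M) is infinite. Then there exists a submodule K ≤ M and a simple R-module S with End_R(S) infinite such that M/K contains a submodule isomorphic to S ⊕ S. -/
/-!
Pick a submodule `N ≤ M` that is minimal among those with infinitely many submodules (`M` is
artinian); then every proper submodule of `N` has only finitely many submodules. Hence `N` has
infinitely many maximal submodules, and since a fixed maximal `m₀` has only finitely many
submodules, infinitely many maximal `m ≠ m₀` share the same `m ⊓ m₀ = D`. In `N / D` the images of
all these `m` are complements of `m₀ / D`, and all of these are simple. Complements of `m₀ / D`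
correspond to projections onto it, which are determined by their restriction to one complement
`C`; so `Hom(C, m₀ / D)` is infinite. A nonzero map between simple modules is an isomorphism, so
`End C` is infinite and `N / D = C ⊕ m₀ / D ≅ C × C`. Finally `N / D` embeds in `M / D`.
-/

open Set Submodule

section Lattice

variable {α : Type*} [Lattice α] [OrderTop α]

theorem infinite_setOf_isCoatom [IsCoatomic α] [Infinite α]
    (hfin : ∀ a ≠ (⊤ : α), (Iic a).Finite) : {a : α | IsCoatom a}.Infinite := by
  intro hco
  refine infinite_univ (α := α) (((finite_singleton ⊤).union
    (hco.biUnion fun m hm => hfin m hm.1)).subset fun a _ => ?_)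
  rcases eq_top_or_exists_le_coatom a with rfl | ⟨m, hm, ham⟩
  · exact Or.inl rfl
  · exact Or.inr (mem_biUnion hm ham)

theorem exists_infinite_setOf_isCompl_Ici (hfin : ∀ a ≠ (⊤ : α), (Iic a).Finite)
    (hco : {a : α | IsCoatom a}.Infinite) :
    ∃ (d m₀ : α) (h₀ : d ≤ m₀), IsCoatom m₀ ∧
      {c : Ici d | IsCoatom (c : α) ∧ IsCompl (⟨m₀, h₀⟩ : Ici d) c}.Infinite := by
  obtain ⟨m₀, hm₀⟩ := hco.nonempty
  let others : Set α := {a | IsCoatom a} \ {m₀}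
  have : Infinite others := (hco.sdiff (finite_singleton m₀)).to_subtype
  have : Finite (Iic m₀) := (hfin m₀ hm₀.1).to_subtype
  let g : others → Iic m₀ := fun m => ⟨m ⊓ m₀, inf_le_right⟩
  obtain ⟨⟨d, hd⟩, hfiber⟩ := Finite.exists_infinite_fiber g
  let fiber : Set α := Subtype.val '' (g ⁻¹' {⟨d, hd⟩})
  have hfiber_inf : fiber.Infinite :=
    (infinite_coe_iff.mp hfiber).image Subtype.val_injective.injOn
  have hS : ∀ m ∈ fiber, IsCoatom m ∧ m ≠ m₀ ∧ m ⊓ m₀ = d := by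
    rintro _ ⟨⟨m, hm, hne⟩, hmd, rfl⟩
    exact ⟨hm, hne, congrArg Subtype.val hmd⟩
  refine ⟨d, m₀, hd, hm₀,
    (hfiber_inf.preimage (f := ((↑) : Ici d → α)) fun m hm => ?_).mono fun c hc => ?_⟩
  · exact ⟨⟨m, (hS m hm).2.2 ▸ inf_le_left⟩, rfl⟩
  · obtain ⟨hc, hne, hinf⟩ := hS c hc
    refine ⟨hc, Ici.isCompl_iff.mpr ⟨by rw [inf_comm]; exact hinf, ?_⟩⟩
    exact codisjoint_iff.mpr (hm₀.sup_eq_top_of_ne hc (Ne.symm hne))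

end Lattice

section Module

def HasSimpleSquareWithInfiniteEnd (R X : Type*) [Ring R] [AddCommGroup X] [Module R X] : Prop :=
  ∃ S : Submodule R X, IsSimpleModule R S ∧ Infinite (Module.End R S) ∧
    ∃ T : Submodule R X, Nonempty (T ≃ₗ[R] (S × S))

variable {R X Y : Type*} [Ring R] [AddCommGroup X] [Module R X] [AddCommGroup Y] [Module R Y]

theorem HasSimpleSquareWithInfiniteEnd.of_injective {f : X →ₗ[R] Y} (hf : Function.Injective f)
    (h : HasSimpleSquareWithInfiniteEnd R X) : HasSimpleSquareWithInfiniteEnd R Y := by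
  obtain ⟨S, hS, hEnd, T, ⟨e⟩⟩ := h
  let eS := equivMapOfInjective f hf S
  exact ⟨S.map f, hS.congr eS.symm, Infinite.of_injective _ eS.conjRingEquiv.injective,
    T.map f, ⟨(equivMapOfInjective f hf T).symm ≪≫ₗ e ≪≫ₗ eS.prodCongr eS⟩⟩

theorem HasSimpleSquareWithInfiniteEnd.quotient_map {f : X →ₗ[R] Y} (hf : Function.Injective f)
    {K : Submodule R X} (h : HasSimpleSquareWithInfiniteEnd R (X ⧸ K)) :
    HasSimpleSquareWithInfiniteEnd R (Y ⧸ K.map f) := by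
  have hK : K = LinearMap.ker ((K.map f).mkQ ∘ₗ f) := by
    rw [LinearMap.ker_comp, ker_mkQ, comap_map_eq_of_injective hf]
  exact h.of_injective (LinearMap.ker_eq_bot.mp (ker_liftQ_eq_bot' _ _ hK))

theorem infinite_linearMap_of_infinite_setOf_isCompl {p q : Submodule R X} (hpq : IsCompl p q)
    (hinf : {q' | IsCompl p q'}.Infinite) : Infinite (q →ₗ[R] p) := by
  have : Infinite {q' // IsCompl p q'} := hinf.to_subtype
  refine Infinite.of_injective (fun q' => (p.isComplEquivProj q' : X →ₗ[R] p) ∘ₗ q.subtype)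
    fun q₁ q₂ h => p.isComplEquivProj.injective (Subtype.ext ?_)
  refine LinearMap.ext_on_codisjoint hpq.codisjoint (fun x hx => ?_) fun x hx => ?_
  · exact ((p.isComplEquivProj q₁).2 ⟨x, hx⟩).trans
      ((p.isComplEquivProj q₂).2 ⟨x, hx⟩).symm
  · exact LinearMap.congr_fun h ⟨x, hx⟩

theorem HasSimpleSquareWithInfiniteEnd.of_isCompl {S S' : Submodule R X} (h : IsCompl S S')
    [IsSimpleModule R S] [IsSimpleModule R S'] [Infinite (S →ₗ[R] S')] :
    HasSimpleSquareWithInfiniteEnd R X := by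
  obtain ⟨f, hf⟩ := exists_ne (0 : S →ₗ[R] S')
  let e := LinearEquiv.ofBijective f (LinearMap.bijective_of_ne_zero hf)
  refine ⟨S, inferInstance, Infinite.of_injective _
    (LinearEquiv.arrowCongrAddEquiv (LinearEquiv.refl R S) e.symm).injective, ⊤,
    ⟨Submodule.topEquiv ≪≫ₗ (prodEquivOfIsCompl S S' h).symm ≪≫ₗ
      (LinearEquiv.refl R S).prodCongr e.symm⟩⟩

theorem HasSimpleSquareWithInfiniteEnd.of_isCompl_of_isCoatom {n C : Submodule R X}
    (hnC : IsCompl n C) (hn : IsCoatom n) (hC : IsCoatom C)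
    (hinf : {q | IsCompl n q}.Infinite) : HasSimpleSquareWithInfiniteEnd R X := by
  have : IsSimpleModule R C :=
    (isSimpleModule_iff_isCoatom.mpr hn).congr (quotientEquivOfIsCompl n C hnC).symm
  have : IsSimpleModule R n :=
    (isSimpleModule_iff_isCoatom.mpr hC).congr (quotientEquivOfIsCompl C n hnC.symm).symm
  have := infinite_linearMap_of_infinite_setOf_isCompl hnC hinf
  exact .of_isCompl hnC.symm

theorem exists_quotient_hasSimpleSquareWithInfiniteEnd [IsNoetherian R X]
    [Infinite (Submodule R X)] (hfin : ∀ p : Submodule R X, p ≠ ⊤ → (Iic p).Finite) :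
    ∃ K : Submodule R X, HasSimpleSquareWithInfiniteEnd R (X ⧸ K) := by
  obtain ⟨d, m₀, h₀, hm₀, hinf⟩ :=
    exists_infinite_setOf_isCompl_Ici hfin (infinite_setOf_isCoatom hfin)
  let e := (comapMkQRelIso d).symm
  obtain ⟨c, hc⟩ := hinf.nonempty
  refine ⟨d, .of_isCompl_of_isCoatom (e.isCompl hc.2) ((e.isCoatom_iff _).mpr (hm₀.Ici h₀))
    ((e.isCoatom_iff _).mpr (hc.1.Ici c.2)) ((hinf.image e.injective.injOn).mono ?_)⟩
  rintro _ ⟨c', hc', rfl⟩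
  exact e.isCompl hc'.2

theorem IsArtinian.exists_minimal_infinite_submodule_lattice [IsArtinian R X]
    [Infinite (Submodule R X)] : ∃ N : Submodule R X,
      Infinite (Submodule R N) ∧ ∀ p : Submodule R N, p ≠ ⊤ → (Iic p).Finite := by
  obtain ⟨N, hN, hmin⟩ := wellFounded_lt.has_min {N : Submodule R X | (Iic N).Infinite}
    ⟨⊤, show (Iic ⊤).Infinite by rw [Iic_top]; exact infinite_univ⟩
  let f := MapSubtype.orderEmbedding N
  refine ⟨N, (mapIic N).toEquiv.infinite_iff.mpr hN.to_subtype, fun p hp => ?_⟩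
  have hpN : f p < N := by simpa [f] using f.strictMono hp.lt_top
  exact ((not_infinite.mp fun h => hmin _ h hpN).preimage f.injective.injOn).subset
    fun _ hq => f.monotone hq

end Module

/-- Let `M` be a finite-length `R`-module with infinitely many submodules. Then
there is a submodule `K ≤ M` and a simple `R`-module `S` with `End_R(S)` infinite
such that `M/K` contains a submodule isomorphic to `S ⊕ S`. -/
theorem stmt_12 {R M : Type*} [Ring R] [AddCommGroup M] [Module R M]
    (hlen : IsFiniteLength R M) (hinf : Infinite (Submodule R M)) :
    ∃ (K : Submodule R M) (S : Submodule R (M ⧸ K)),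
      IsSimpleModule R S ∧ Infinite (Module.End R S) ∧
        ∃ T : Submodule R (M ⧸ K), Nonempty (T ≃ₗ[R] (S × S)) := by
  obtain ⟨_, _⟩ := isFiniteLength_iff_isNoetherian_isArtinian.mp hlen
  obtain ⟨N, _, hfin⟩ := IsArtinian.exists_minimal_infinite_submodule_lattice (R := R) (X := M)
  obtain ⟨K, hK⟩ := exists_quotient_hasSimpleSquareWithInfiniteEnd hfin
  exact ⟨_, hK.quotient_map N.injective_subtype⟩
end

section
/- Let M be a finite-length R-module with infinitely many submodules. Then there exists a submodule N ≤ M minimal with respect to having infinitely many submodules, and this N has infinitely many maximal submodules. -/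
/-!
Artinianity gives a submodule `N` minimal among those with infinitely many submodules.
Noetherianity puts every proper submodule of `N` inside a maximal one, so the submodules of `N`
are `N` itself and the submodules of its maximal submodules; by minimality each maximal submodule
has only finitely many submodules, hence there must be infinitely many maximal submodules.
-/

open Set

section Order

variable {α : Type*} [PartialOrder α] {a b : α}

theorem Set.Iic_subset_insert_biUnion_covBy [IsStronglyCoatomic α] (a : α) :
    Iic a ⊆ insert a (⋃ b ∈ {b | b ⋖ a}, Iic b) := by
  intro x hx
  rcases (mem_Iic.mp hx).eq_or_lt with rfl | hlt
  · exact mem_insert x _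
  · obtain ⟨b, hxb, hba⟩ := exists_le_covBy_of_lt hlt
    exact mem_insert_of_mem _ (mem_biUnion hba hxb)

theorem Set.finite_Iic_of_finite_covBy [IsStronglyCoatomic α] (hcov : {b | b ⋖ a}.Finite)
    (hbelow : ∀ b, b ⋖ a → (Iic b).Finite) : (Iic a).Finite :=
  ((hcov.biUnion hbelow).insert a).subset (Iic_subset_insert_biUnion_covBy a)

theorem Minimal.finite_Iic_of_lt (h : Minimal (fun c ↦ (Iic c).Infinite) a) (hb : b < a) :
    (Iic b).Finite :=
  not_not.mp (h.not_prop_of_lt hb)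

theorem Minimal.infinite_setOf_covBy [IsStronglyCoatomic α]
    (h : Minimal (fun c ↦ (Iic c).Infinite) a) : {b | b ⋖ a}.Infinite :=
  fun hcov ↦ h.prop <| finite_Iic_of_finite_covBy hcov fun _ hb ↦ h.finite_Iic_of_lt hb.lt

end Order

namespace Submodule

variable {R M : Type*} [Ring R] [AddCommGroup M] [Module R M]

theorem finite_iff_finite_Iic (N : Submodule R M) :
    Finite (Submodule R N) ↔ (Iic N).Finite :=
  (Equiv.finite_iff N.mapIic.toEquiv).trans finite_coe_iff

theorem infinite_iff_infinite_Iic (N : Submodule R M) :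
    Infinite (Submodule R N) ↔ (Iic N).Infinite :=
  (Equiv.infinite_iff N.mapIic.toEquiv).trans infinite_coe_iff

theorem infinite_coatom_iff_infinite_setOf_covBy (N : Submodule R M) :
    Infinite {P : Submodule R N // IsCoatom P} ↔ {b | b ⋖ N}.Infinite :=
  (Equiv.infinite_iff <| (N.mapIic.toEquiv.subtypeEquiv fun P ↦
      (N.mapIic.isCoatom_iff P).symm.trans Iic.isCoatom_iff).trans <|
    Equiv.subtypeSubtypeEquivSubtype (q := (· ⋖ N)) CovBy.le).trans infinite_coe_iff

end Submodule

/-- Let `M` be a finite-length `R`-module with infinitely many submodules. Then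
there is a submodule `N ≤ M` minimal with respect to having infinitely many
submodules, and such an `N` has infinitely many maximal (proper) submodules. -/
theorem stmt_13 {R M : Type*} [Ring R] [AddCommGroup M] [Module R M]
    (hlen : IsFiniteLength R M) (hinf : Infinite (Submodule R M)) :
    ∃ N : Submodule R M, Infinite (Submodule R N) ∧
      (∀ N' : Submodule R M, N' < N → Finite (Submodule R N')) ∧
      Infinite {P : Submodule R N // IsCoatom P} := by
  obtain ⟨_, _⟩ := isFiniteLength_iff_isNoetherian_isArtinian.mp hlen
  have htop : (Iic (⊤ : Submodule R M)).Infinite := by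
    rw [Iic_top]
    exact infinite_univ
  obtain ⟨N, hN⟩ :=
    exists_minimal_of_wellFoundedLT (fun N : Submodule R M ↦ (Iic N).Infinite) ⟨⊤, htop⟩
  exact ⟨N, N.infinite_iff_infinite_Iic.mpr hN.prop,
    fun N' hN' ↦ N'.finite_iff_finite_Iic.mpr (hN.finite_Iic_of_lt hN'),
    N.infinite_coatom_iff_infinite_setOf_covBy.mpr hN.infinite_setOf_covBy⟩
end

section
/- All finite-length R-modules have finitely many submodules if and only if every simple R-module has a finite endomorphism ring End_R(S). -/
/-!
An endomorphism `f` of a simple module `S` is determined by its graph, a submodule of the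
finite-length module `S × S`; this gives one direction. Conversely, if every `End_R(S)` is finite,
then by Schur's lemma and dévissage along composition series `Hom_R(X, Y)` is finite for all
finite-length `X`, `Y`. Now let `N` be a maximal submodule of `M`. A submodule `P` either lies
in `N` (finitely many by induction), or satisfies `P + N = M`; then `P / (P ∩ N)` is a
complement of `N / (P ∩ N)` in `M / (P ∩ N)`, and complements of a submodule `K` of `X`
correspond to projections `X → K`, of which there are finitely many.
-/

universe u

open Submodule

theorem AddMonoidHom.finite_of_ker_subset_range {G H K : Type*} [AddGroup G] [AddGroup K]
    [Finite H] [Finite K] (i : H → G) (p : G →+ K) (h : ∀ g, p g = 0 → g ∈ Set.range i) :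
    Finite G := by
  have : Finite p.ker := ((Set.finite_range i).subset fun g hg => h g hg).to_subtype
  have : Finite (G ⧸ p.ker) := Finite.of_injective _ (QuotientAddGroup.kerLift_injective p)
  exact Finite.of_equiv _ (AddSubgroup.addGroupEquivQuotientProdAddSubgroup (s := p.ker)).symm

theorem LinearMap.graph_injective {R M N : Type*} [Semiring R] [AddCommMonoid M] [Module R M]
    [AddCommMonoid N] [Module R N] :
    Function.Injective (LinearMap.graph : (M →ₗ[R] N) → _) := by
  intro f g hfg
  ext x
  have hx : (x, f x) ∈ g.graph := hfg ▸ (f.mem_graph_iff _).mpr rfl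
  exact (g.mem_graph_iff _).mp hx

section FiniteHom

variable {R : Type*} [Ring R]

theorem IsSimpleModule.finite_linearMap {S T : Type*} [AddCommGroup S] [Module R S]
    [AddCommGroup T] [Module R T] [IsSimpleModule R S] [IsSimpleModule R T]
    [Finite (Module.End R S)] : Finite (T →ₗ[R] S) := by
  by_cases h : ∃ e : T →ₗ[R] S, e ≠ 0
  · obtain ⟨e, he⟩ := h
    let E : T ≃ₗ[R] S := LinearEquiv.ofBijective e (e.bijective_of_ne_zero he)
    exact Finite.of_injective (fun f => f ∘ₗ E.symm.toLinearMap)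
      fun f g hfg => (LinearMap.cancel_right E.symm.surjective).mp hfg
  · push Not at h
    have : Subsingleton (T →ₗ[R] S) := ⟨fun f g => (h f).trans (h g).symm⟩
    infer_instance

theorem IsFiniteLength.finite_linearMap_of_isSimpleModule {X S : Type*}
    [AddCommGroup X] [Module R X] [AddCommGroup S] [Module R S] [IsSimpleModule R S]
    [Finite (Module.End R S)]
    (hX : IsFiniteLength R X) : Finite (X →ₗ[R] S) := by
  induction hX with
  | of_subsingleton => infer_instance
  | @of_simple_quotient M _ _ N _ _ ih =>
    have : Finite ((M ⧸ N) →ₗ[R] S) := IsSimpleModule.finite_linearMap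
    refine AddMonoidHom.finite_of_ker_subset_range (· ∘ₗ N.mkQ)
      (.mk' (· ∘ₗ N.subtype) fun _ _ => LinearMap.add_comp _ _ _) fun f hf => ?_
    have hN : N ≤ LinearMap.ker f := fun x hx => by
      simpa using LinearMap.congr_fun hf ⟨x, hx⟩
    exact ⟨N.liftQ f hN, N.liftQ_mkQ f hN⟩

theorem IsFiniteLength.finite_linearMap {X : Type*} {Y : Type u} [AddCommGroup X] [Module R X]
    [AddCommGroup Y] [Module R Y]
    (H : ∀ (S : Type u) [AddCommGroup S] [Module R S],
      IsSimpleModule R S → Finite (Module.End R S))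
    (hX : IsFiniteLength R X) (hY : IsFiniteLength R Y) : Finite (X →ₗ[R] Y) := by
  induction hY with
  | of_subsingleton => infer_instance
  | @of_simple_quotient M _ _ N hsimple _ ih =>
    have := H (M ⧸ N) hsimple
    have : Finite (X →ₗ[R] M ⧸ N) := hX.finite_linearMap_of_isSimpleModule
    refine AddMonoidHom.finite_of_ker_subset_range (N.subtype ∘ₗ ·)
      (.mk' (N.mkQ ∘ₗ ·) fun _ _ => LinearMap.comp_add _ _ _) fun f hf => ?_
    have hN : ∀ x, f x ∈ N := fun x => by
      simpa using LinearMap.congr_fun hf x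
    exact ⟨f.codRestrict N hN, f.subtype_comp_codRestrict N hN⟩

end FiniteHom

section Lattice

variable {R M : Type*} [Ring R] [AddCommGroup M] [Module R M]

theorem Submodule.isCompl_map_mkQ {A N P : Submodule R M} (hinf : P ⊓ N = A)
    (hsup : P ⊔ N = ⊤) :
    IsCompl (N.map A.mkQ) (P.map A.mkQ) := by
  constructor
  · rw [disjoint_iff]
    apply comap_injective_of_surjective A.mkQ_surjective
    rw [comap_inf, comap_map_mkQ, comap_map_mkQ, comap_bot, ker_mkQ, ← hinf,
      sup_of_le_right inf_le_right, sup_of_le_right inf_le_left, inf_comm]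
  · rw [codisjoint_iff, ← map_sup, sup_comm, hsup, map_top, range_mkQ]

theorem Submodule.finite_of_isCoatom {N : Submodule R M} (hN : IsCoatom N)
    [Finite (Submodule R N)] (hHom : ∀ A ≤ N, Finite (M ⧸ A →ₗ[R] N.map A.mkQ)) :
    Finite (Submodule R M) := by
  have hIic : (Set.Iic N).Finite :=
    (Set.finite_range (map N.subtype)).subset fun P hP =>
      ⟨P.comap N.subtype, by rw [map_comap_subtype, inf_of_le_right hP]⟩
  have hfiber : ∀ A ∈ Set.Iic N, {P | P ⊓ N = A ∧ P ⊔ N = ⊤}.Finite := by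
    intro A hA
    have := hHom A hA
    have hcompl : {Q | IsCompl (N.map A.mkQ) Q}.Finite :=
      Set.finite_coe_iff.mp (Finite.of_equiv _ (N.map A.mkQ).isComplEquivProj.symm)
    have hcomap : ∀ P ∈ {P | P ⊓ N = A ∧ P ⊔ N = ⊤}, comap A.mkQ (map A.mkQ P) = P :=
      fun P hP => by rw [comap_map_mkQ, sup_of_le_right (hP.1 ▸ inf_le_left)]
    refine Set.Finite.of_finite_image (f := map A.mkQ) (hcompl.subset ?_) fun P hP Q hQ hPQ => ?_
    · rintro _ ⟨P, hP, rfl⟩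
      exact isCompl_map_mkQ hP.1 hP.2
    · rw [← hcomap P hP, ← hcomap Q hQ, hPQ]
  have hcover : ∀ P : Submodule R M,
      P ∈ Set.Iic N ∪ ⋃ A ∈ Set.Iic N, {P | P ⊓ N = A ∧ P ⊔ N = ⊤} := by
    intro P
    rcases hN.le_iff.mp (le_sup_right : N ≤ P ⊔ N) with h | h
    · exact Or.inr (Set.mem_biUnion (inf_le_right : P ⊓ N ≤ N) ⟨rfl, h⟩)
    · exact Or.inl (le_sup_left.trans h.le)
  exact Set.finite_univ_iff.mp ((hIic.union (hIic.biUnion hfiber)).subset fun P _ => hcover P)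

end Lattice

theorem IsFiniteLength.finite_submodule {R : Type*} [Ring R] {M : Type u} [AddCommGroup M]
    [Module R M]
    (H : ∀ (S : Type u) [AddCommGroup S] [Module R S],
      IsSimpleModule R S → Finite (Module.End R S))
    (hM : IsFiniteLength R M) : Finite (Submodule R M) := by
  induction hM with
  | of_subsingleton => infer_instance
  | @of_simple_quotient M _ _ N hsimple hN ih =>
    have hM : IsFiniteLength R M := .of_simple_quotient hN
    refine finite_of_isCoatom (isSimpleModule_iff_isCoatom.mp hsimple) fun A _ => ?_
    have hMA : IsFiniteLength R (M ⧸ A) := hM.of_surjective A.mkQ_surjective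
    exact hMA.finite_linearMap H (hMA.of_injective (N.map A.mkQ).injective_subtype)

/-- All finite-length `R`-modules have finitely many submodules if and only if
every simple `R`-module has a finite endomorphism ring. -/
theorem stmt_14 {R : Type u} [Ring R] :
    (∀ (M : Type u) [AddCommGroup M] [Module R M],
        IsFiniteLength R M → Finite (Submodule R M)) ↔
      (∀ (S : Type u) [AddCommGroup S] [Module R S],
        IsSimpleModule R S → Finite (Module.End R S)) := by
  constructor
  · intro h S _ _ hS
    have hSS : IsFiniteLength R (S × S) :=
      isFiniteLength_iff_isNoetherian_isArtinian.mpr ⟨inferInstance, inferInstance⟩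
    have := h _ hSS
    exact Finite.of_injective _ LinearMap.graph_injective
  · intro H M _ _ hM
    exact hM.finite_submodule H
end

section
/- Let M be a nonzero R-module with finitely many submodules. If M is not semisimple, then μ_R(M) = 0. -/
/-!
Weisner's theorem: in a finite lattice, for every `a ≠ ⊥` the Möbius values `μ x` summed over
the `x` with `x ⊔ a = y` vanish, by induction on `y`. Take `y = ⊤` and `a` the Jacobson radical,
which lies in every maximal submodule: then `x ⊔ a = ⊤` forces `x = ⊤`, so the sum is `μ ⊤`.
An Artinian module is semisimple iff its Jacobson radical vanishes, so `a ≠ ⊥`.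
-/

open Finset

section Mobius

variable {α : Type*} [Lattice α] [OrderBot α] [Fintype α] [DecidableEq α] [DecidableLE α]
  {μ : α → ℤ}

theorem sum_filter_sup_eq_eq_zero (hμ : ∀ y ≠ ⊥, ∑ x ∈ univ.filter (· ≤ y), μ x = 0)
    {a : α} (ha : a ≠ ⊥) (y : α) : ∑ x ∈ univ.filter (fun x => x ⊔ a = y), μ x = 0 := by
  induction y using WellFoundedLT.induction with
  | ind y ih =>
  have hle : ∑ x ∈ univ.filter (fun x => x ⊔ a ≤ y), μ x = 0 := by
    by_cases hay : a ≤ y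
    · simp only [sup_le_iff, hay, and_true]
      exact hμ y (ne_bot_of_le_ne_bot ha hay)
    · rw [filter_false_of_mem fun x _ h => hay (le_sup_right.trans h), sum_empty]
  rw [← sum_fiberwise_of_maps_to (g := (· ⊔ a)) (t := univ.filter (· ≤ y))
    (fun x hx => by simpa using hx)] at hle
  have hfiber : ∀ y' ≤ y, (univ.filter (fun x => x ⊔ a ≤ y)).filter (fun x => x ⊔ a = y') =
      univ.filter (fun x => x ⊔ a = y') := fun y' hy' => by
    ext x
    simp only [mem_filter, mem_univ, true_and, and_iff_right_iff_imp]
    exact fun h => h ▸ hy'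
  rw [sum_eq_single_of_mem y (by simp) fun y' hy' hne => ?_, hfiber y le_rfl] at hle
  · exact hle
  · rw [mem_filter] at hy'
    rw [hfiber y' hy'.2, ih y' (hy'.2.lt_of_ne hne)]

theorem mobius_top_eq_zero_of_forall_isCoatom_le [OrderTop α]
    (hμ : ∀ y ≠ ⊥, ∑ x ∈ univ.filter (· ≤ y), μ x = 0)
    {a : α} (ha : a ≠ ⊥) (hcoatom : ∀ c, IsCoatom c → a ≤ c) : μ ⊤ = 0 := by
  have hsup : univ.filter (fun x => x ⊔ a = ⊤) = {⊤} := by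
    ext x
    simp only [mem_filter, mem_univ, true_and, mem_singleton]
    refine ⟨fun hx => ?_, fun hx => hx ▸ top_sup_eq a⟩
    obtain h | ⟨c, hc, hxc⟩ := eq_top_or_exists_le_coatom x
    · exact h
    · exact absurd (top_le_iff.mp (hx ▸ sup_le hxc (hcoatom c hc))) hc.1
  simpa [hsup] using sum_filter_sup_eq_eq_zero hμ ha ⊤

end Mobius

theorem stmt_15_general {R M : Type*} [Ring R] [AddCommGroup M] [Module R M]
    [Finite (Submodule R M)]
    (μ : Submodule R M → ℤ)
    (hrec : ∀ N : Submodule R M, N ≠ ⊥ → ∑ᶠ N' ∈ {N' : Submodule R M | N' ≤ N}, μ N' = 0)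
    (hns : ¬ IsSemisimpleModule R M) :
    μ ⊤ = 0 := by
  classical
  have := Fintype.ofFinite (Submodule R M)
  refine mobius_top_eq_zero_of_forall_isCoatom_le (a := Module.jacobson R M) (fun N hN => ?_)
    (mt (IsArtinian.isSemisimpleModule_iff_jacobson R M).mpr hns) fun c hc => sInf_le hc
  rw [← hrec N hN, ← coe_filter_univ, finsum_mem_coe_finset]

/-- Let `M` be a nonzero `R`-module with finitely many submodules, and let `μ` be
the Möbius function of the submodule lattice, i.e. the (unique) function with
`μ ⊥ = 1` and `∑_{N' ≤ N} μ N' = 0` for every nonzero submodule `N`.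
If `M` is not semisimple then `μ_R(M) = μ ⊤ = 0`. -/
theorem stmt_15 {R M : Type*} [Ring R] [AddCommGroup M] [Module R M]
    [Nontrivial M] [Finite (Submodule R M)]
    (μ : Submodule R M → ℤ) (hbot : μ ⊥ = 1)
    (hrec : ∀ N : Submodule R M, N ≠ ⊥ → ∑ᶠ N' ∈ {N' : Submodule R M | N' ≤ N}, μ N' = 0)
    (hns : ¬ IsSemisimpleModule R M) :
    μ ⊤ = 0 :=
  stmt_15_general μ hrec hns
end

section
/- Let S be a simple R-module with |End_R(S)| = q finite and t ≥ 1, and fix a simple submodule T ≤ S^t. Then exactly 1 + q + ... + q^{t-2} of the maximal submodules of S^t contain T, and exactly q^{t-1} maximal submodules do not contain T. -/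
/-!
Every maximal submodule `P` of `S^t` has `S^t ⧸ P ≅ S`, so the maximal submodules are exactly the
kernels of the nonzero maps `f : S^t → S`, and `f` is determined by its kernel up to one of the
`q - 1` automorphisms of `S`. The maps `S^t → S` form a group of order `q^t`; those vanishing on
`T ≅ S` form the kernel of the restriction to `Hom(T, S) ≅ End(S)`, which is surjective by
semisimplicity, so there are `q^(t-1)` of them. Dividing the numbers `q^(t-1) - 1` and
`q^t - q^(t-1)` of nonzero maps killing, resp. not killing, `T` by `q - 1` gives both counts.
-/

open LinearMap Submodule

theorem Nat.card_subtype_add_card_subtype_not {α : Type*} [Finite α] (p : α → Prop) :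
    Nat.card {x // p x} + Nat.card {x // ¬ p x} = Nat.card α := by
  classical exact Nat.card_sum.symm.trans (Nat.card_congr (Equiv.sumCompl p))

theorem Nat.card_subtype_ne_and_add_one {α : Type*} [Finite α] {p : α → Prop} {a : α}
    (ha : p a) : Nat.card {x // x ≠ a ∧ p x} + 1 = Nat.card {x // p x} := by
  have : {x | x ≠ a ∧ p x} = {x | p x} \ {a} := by ext; simp [and_comm]
  change Set.ncard {x | x ≠ a ∧ p x} + 1 = Set.ncard {x | p x}
  rw [this, Set.ncard_sdiff_singleton_add_one (s := {x | p x}) ha]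

theorem Nat.card_subtype_comp_eq_mul {α β γ : Type*} (F : α → β) (p : β → Prop)
    (e : ∀ b, p b → {a // F a = b} ≃ γ) :
    Nat.card {a // p (F a)} = Nat.card {b // p b} * Nat.card γ := by
  rw [← Nat.card_prod]
  exact Nat.card_congr <| (Equiv.sigmaSubtypeFiberEquivSubtype F fun _ ↦ Iff.rfl).symm.trans <|
    (Equiv.sigmaCongrRight fun b : {b // p b} ↦ e b.1 b.2).trans (Equiv.sigmaEquivProd _ _)

section Semisimple

variable {R M X : Type*} [Ring R] [AddCommGroup M] [Module R M] [AddCommGroup X] [Module R X]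

theorem IsSemisimpleModule.card_linearMap_eq_card_le_ker_mul [IsSemisimpleModule R M]
    (N : Submodule R M) :
    Nat.card (M →ₗ[R] X) = Nat.card {f : M →ₗ[R] X // N ≤ ker f} * Nat.card (N →ₗ[R] X) := by
  let restrict := (lcomp ℤ X N.subtype).toAddMonoidHom
  have surj : Function.Surjective restrict := fun g ↦
    (IsSemisimpleModule.extension_property N.subtype N.injective_subtype g).imp fun _ h ↦ h
  have mem_ker (f : M →ₗ[R] X) : f ∈ restrict.ker ↔ N ≤ ker f := by
    change f ∘ₗ N.subtype = 0 ↔ _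
    rw [← range_le_ker_iff, range_subtype]
  rw [← restrict.ker.card_mul_index, AddSubgroup.index_ker restrict,
    restrict.range_eq_top_of_surjective surj, AddSubgroup.card_top]
  congr 1
  exact Nat.card_congr (Equiv.subtypeEquivRight mem_ker)

end Semisimple

section Simple

variable {R M S : Type*} [Ring R] [AddCommGroup M] [Module R M] [AddCommGroup S] [Module R S]
  [IsSimpleModule R S]

theorem LinearMap.isCoatom_ker_iff_ne_zero {f : M →ₗ[R] S} : IsCoatom (ker f) ↔ f ≠ 0 :=
  ⟨fun h hf ↦ h.1 (ker_eq_top.2 hf), fun h ↦ isCoatom_ker_of_surjective (surjective_of_ne_zero h)⟩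

theorem Module.End.card_linearEquiv_self [Finite (Module.End R S)] :
    Nat.card (S ≃ₗ[R] S) = Nat.card (Module.End R S) - 1 := by
  classical
  rw [← Nat.card_units, Nat.card_congr (GeneralLinearGroup.generalLinearEquiv R S).toEquiv]

noncomputable def Submodule.kerEqEquiv {P : Submodule R M} (hP : P ≠ ⊤) :
    {f : M →ₗ[R] S // ker f = P} ≃ ((M ⧸ P) ≃ₗ[R] S) where
  toFun f := .ofBijective (P.liftQ f.1 f.2.ge)
    ⟨ker_eq_bot.1 (ker_liftQ_eq_bot _ _ _ f.2.le),
      .of_comp (g := P.mkQ) (surjective_of_ne_zero fun h ↦ hP (f.2 ▸ ker_eq_top.2 h))⟩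
  invFun e := ⟨e.toLinearMap ∘ₗ P.mkQ, by rw [LinearEquiv.ker_comp, ker_mkQ]⟩
  left_inv f := by ext; rfl
  right_inv e := by ext x; induction x using Quotient.inductionOn'; rfl

theorem card_ne_zero_ker_eq_card_isCoatom_mul
    (hM : ∀ P : Submodule R M, IsCoatom P → Nonempty ((M ⧸ P) ≃ₗ[R] S))
    (c : Submodule R M → Prop) :
    Nat.card {f : M →ₗ[R] S // f ≠ 0 ∧ c (ker f)} =
      Nat.card {P : Submodule R M // IsCoatom P ∧ c P} * Nat.card (S ≃ₗ[R] S) := by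
  simp_rw [← isCoatom_ker_iff_ne_zero]
  refine Nat.card_subtype_comp_eq_mul (ker ·) (fun P ↦ IsCoatom P ∧ c P) fun P hP ↦
    (P.kerEqEquiv hP.1.1).trans ?_
  let e := (hM P hP.1).some
  exact ⟨e.symm.trans, e.trans, fun g ↦ by ext; simp, fun g ↦ by ext; simp⟩

variable [Finite (M →ₗ[R] S)]

theorem card_isCoatom_and_le_mul_add_one
    (hM : ∀ P : Submodule R M, IsCoatom P → Nonempty ((M ⧸ P) ≃ₗ[R] S)) (N : Submodule R M) :
    Nat.card {P : Submodule R M // IsCoatom P ∧ N ≤ P} * Nat.card (S ≃ₗ[R] S) + 1 =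
      Nat.card {f : M →ₗ[R] S // N ≤ ker f} := by
  rw [← card_ne_zero_ker_eq_card_isCoatom_mul hM (N ≤ ·)]
  exact Nat.card_subtype_ne_and_add_one (p := fun f ↦ N ≤ ker f) (by simp)

theorem card_isCoatom_and_not_le_mul_add
    (hM : ∀ P : Submodule R M, IsCoatom P → Nonempty ((M ⧸ P) ≃ₗ[R] S)) (N : Submodule R M) :
    Nat.card {P : Submodule R M // IsCoatom P ∧ ¬N ≤ P} * Nat.card (S ≃ₗ[R] S) +
      Nat.card {f : M →ₗ[R] S // N ≤ ker f} = Nat.card (M →ₗ[R] S) := by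
  have ne_zero (f : M →ₗ[R] S) (hf : ¬N ≤ ker f) : f ≠ 0 := by rintro rfl; simp at hf
  rw [← card_ne_zero_ker_eq_card_isCoatom_mul hM (¬N ≤ ·), add_comm,
    ← Nat.card_subtype_add_card_subtype_not (N ≤ ker ·)]
  congr 1
  exact Nat.card_congr (Equiv.subtypeEquivRight fun f ↦ and_iff_right_of_imp (ne_zero f))

end Simple

section Pi

variable {R S X ι : Type*} [Ring R] [AddCommGroup S] [Module R S] [AddCommGroup X] [Module R X]

theorem Nat.card_linearMap_pi [Fintype ι] [DecidableEq ι] :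
    Nat.card ((ι → S) →ₗ[R] X) = Nat.card (S →ₗ[R] X) ^ Nat.card ι := by
  rw [← Nat.card_congr (lsum R (fun _ : ι ↦ S) ℕ).toEquiv, Nat.card_fun]

theorem Submodule.exists_mkQ_comp_single_ne_zero [Finite ι] [DecidableEq ι]
    {P : Submodule R (ι → S)} (hP : P ≠ ⊤) : ∃ i, P.mkQ ∘ₗ single R (fun _ ↦ S) i ≠ 0 := by
  by_contra! h
  refine hP (eq_top_iff.2 ?_)
  rw [← iSup_range_single]
  exact iSup_le fun i ↦ P.ker_mkQ ▸ range_le_ker_iff.2 (h i)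

theorem Submodule.exists_proj_comp_subtype_ne_zero {T : Submodule R (ι → S)} (hT : T ≠ ⊥) :
    ∃ i, proj i ∘ₗ T.subtype ≠ 0 := by
  by_contra! h
  refine hT (eq_bot_iff.2 ?_)
  rw [← iInf_ker_proj]
  exact le_iInf fun i ↦ T.range_subtype ▸ range_le_ker_iff.2 (h i)

variable [IsSimpleModule R S]

theorem Submodule.nonempty_quotient_linearEquiv_of_isCoatom [Finite ι] {P : Submodule R (ι → S)}
    (hP : IsCoatom P) : Nonempty (((ι → S) ⧸ P) ≃ₗ[R] S) := by
  classical
  have := isSimpleModule_iff_isCoatom.2 hP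
  obtain ⟨i, hi⟩ := exists_mkQ_comp_single_ne_zero hP.1
  exact ⟨(LinearEquiv.ofBijective _ (bijective_of_ne_zero hi)).symm⟩

theorem Submodule.nonempty_linearEquiv_of_isSimpleModule {T : Submodule R (ι → S)}
    [IsSimpleModule R T] : Nonempty (T ≃ₗ[R] S) := by
  obtain ⟨i, hi⟩ := exists_proj_comp_subtype_ne_zero (isSimpleModule_iff_isAtom.1 ‹_›).1
  exact ⟨LinearEquiv.ofBijective _ (bijective_of_ne_zero hi)⟩

end Pi

/-- Let `S` be a simple `R`-module with `|End_R(S)| = q` finite, `t ≥ 1`, and `T` a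
simple submodule of `S^t`. Then exactly `1 + q + ⋯ + q^{t-2}` maximal submodules of
`S^t` contain `T`, and exactly `q^{t-1}` maximal submodules do not contain `T`. -/
theorem stmt_17 {R S : Type*} [Ring R] [AddCommGroup S] [Module R S]
    [IsSimpleModule R S] [Finite (Module.End R S)] (q t : ℕ)
    (hq : Nat.card (Module.End R S) = q) (ht : 1 ≤ t)
    (T : Submodule R (Fin t → S)) (hT : IsSimpleModule R T) :
    Nat.card {P : Submodule R (Fin t → S) // IsCoatom P ∧ T ≤ P} =
      ∑ i ∈ Finset.range (t - 1), q ^ i ∧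
    Nat.card {P : Submodule R (Fin t → S) // IsCoatom P ∧ ¬ T ≤ P} = q ^ (t - 1) := by
  classical
  have hq_two : 2 ≤ q := hq ▸ Finite.one_lt_card
  have card_aut : Nat.card (S ≃ₗ[R] S) = q - 1 := hq ▸ Module.End.card_linearEquiv_self
  have card_dual : Nat.card ((Fin t → S) →ₗ[R] S) = q ^ t := by
    rw [Nat.card_linearMap_pi, Nat.card_fin, ← hq]
  have : Finite ((Fin t → S) →ₗ[R] S) :=
    Nat.finite_of_card_ne_zero (by rw [card_dual]; positivity)
  have card_le_ker : Nat.card {f : (Fin t → S) →ₗ[R] S // T ≤ ker f} = q ^ (t - 1) := by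
    obtain ⟨e⟩ := nonempty_linearEquiv_of_isSimpleModule (T := T)
    have := IsSemisimpleModule.card_linearMap_eq_card_le_ker_mul (X := S) T
    rw [Nat.card_congr (e.arrowCongrAddEquiv (.refl R S)).toEquiv, hq, card_dual,
      ← pow_sub_one_mul (by omega : t ≠ 0)] at this
    exact (Nat.eq_of_mul_eq_mul_right (by omega) this).symm
  have hM (P : Submodule R (Fin t → S)) (hP : IsCoatom P) :=
    nonempty_quotient_linearEquiv_of_isCoatom hP
  have inside := card_isCoatom_and_le_mul_add_one hM T
  have outside := card_isCoatom_and_not_le_mul_add hM T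
  rw [card_aut, card_le_ker] at inside outside
  rw [card_dual, ← pow_sub_one_mul (by omega : t ≠ 0)] at outside
  refine ⟨?_, Nat.eq_of_mul_eq_mul_right (by omega : 0 < q - 1) ?_⟩
  · rw [Nat.geomSum_eq hq_two, ← inside, Nat.add_sub_cancel, Nat.mul_div_cancel _ (by omega)]
  · rw [Nat.mul_sub_one (q ^ (t - 1))]
    omega
end

section
/- Let Q be a finite acyclic quiver, K an infinite field, I an admissible ideal in the path algebra KQ, and M a finite-dimensional representation in rep_K(Q, I). Then the lattice of subrepresentations of M is finite if and only if M is thin, i.e., dim_K(M_a) ≤ 1 for every vertex a of Q. -/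
/-! Representations of bound quivers, defined from scratch. -/

/-- A `K`-linear representation of a quiver `V`: a vector space at each vertex and a
linear (structural) map for each arrow. -/
structure QuiverRep (K : Type) [Field K] (V : Type) [Quiver.{1} V] where
  carrier : V → Type
  [acg : ∀ v, AddCommGroup (carrier v)]
  [mod : ∀ v, Module K (carrier v)]
  map : ∀ {a b : V}, (a ⟶ b) → (carrier a →ₗ[K] carrier b)

attribute [instance] QuiverRep.acg QuiverRep.mod

variable {K : Type} [Field K] {V : Type} [Quiver.{1} V]

/-- Evaluation of a path in a representation: the composite of the structural maps
along the path. -/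
def QuiverRep.evalPath (M : QuiverRep K V) : ∀ {a b : V},
    Quiver.Path a b → (M.carrier a →ₗ[K] M.carrier b)
  | _, _, Quiver.Path.nil => LinearMap.id
  | _, _, Quiver.Path.cons p α => (M.map α).comp (M.evalPath p)

/-- A representation satisfies a relation (a finitely supported `K`-linear
combination of parallel paths) if the corresponding linear combination of path
evaluations vanishes. -/
def QuiverRep.Satisfies (M : QuiverRep K V) {a b : V} (c : Quiver.Path a b →₀ K) :
    Prop :=
  (c.sum fun p k => k • M.evalPath p) = 0

/-- A subrepresentation: a subspace at each vertex, closed under the structural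
maps. -/
structure QuiverSubRep (M : QuiverRep K V) where
  sub : ∀ v : V, Submodule K (M.carrier v)
  closed : ∀ {a b : V} (α : a ⟶ b), ∀ x ∈ sub a, M.map α x ∈ sub b

/-! If `M` is thin, every vertex space has only the subspaces `0` and itself, so there are
finitely many choices for a subrepresentation. Conversely, if `dim M_v ≥ 2`, pick linearly
independent `x, y ∈ M_v`. Since no nontrivial path returns to `v`, the subrepresentation
generated by `x + c • y` meets `M_v` in the line `K ∙ (x + c • y)`, and these lines are
pairwise distinct for the infinitely many `c ∈ K`. -/

section Lines

variable {k W : Type*} [Field k] [AddCommGroup W] [Module k W]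

theorem Submodule.eq_bot_or_eq_top_of_finrank_le_one [FiniteDimensional k W]
    (h : Module.finrank k W ≤ 1) (p : Submodule k W) : p = ⊥ ∨ p = ⊤ := by
  refine or_iff_not_imp_left.mpr fun hp => Submodule.eq_top_of_finrank_eq ?_
  have : Module.finrank k p ≠ 0 := mt Submodule.finrank_eq_zero.mp hp
  have := p.finrank_le
  omega

theorem Submodule.finite_of_finrank_le_one [FiniteDimensional k W]
    (h : Module.finrank k W ≤ 1) : Finite (Submodule k W) :=
  Set.finite_univ_iff.mp <| (Set.toFinite {⊥, ⊤}).subset fun p _ =>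
    p.eq_bot_or_eq_top_of_finrank_le_one h

theorem LinearIndependent.injective_span_singleton_add_smul {x y : W}
    (hxy : LinearIndependent k ![x, y]) : Function.Injective fun c : k => k ∙ (x + c • y) := by
  intro c c' hcc'
  obtain ⟨u, hu⟩ := Submodule.span_singleton_eq_span_singleton.mp hcc'
  have hrel : ((u : k) - 1) • x + ((u : k) * c - c') • y = 0 := by
    rw [Units.smul_def] at hu
    linear_combination (norm := module) hu
  obtain ⟨hu1, hc⟩ := LinearIndependent.pair_iff.mp hxy _ _ hrel
  rw [sub_eq_zero.mp hu1, one_mul] at hc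
  exact sub_eq_zero.mp hc

theorem Submodule.infinite_range_span_singleton [Infinite k] (h : 1 < Module.finrank k W) :
    (Set.range fun x : W => k ∙ x).Infinite := by
  obtain ⟨f, hf⟩ := exists_linearIndependent_of_le_finrank h
  have hxy : LinearIndependent k ![f 0, f 1] := by
    convert hf using 1
    ext i; fin_cases i <;> rfl
  exact Set.infinite_of_injective_forall_mem hxy.injective_span_singleton_add_smul
    fun c => ⟨_, rfl⟩

end Lines

section Subrepresentations

variable {M : QuiverRep K V}

theorem QuiverSubRep.sub_injective : Function.Injective (QuiverSubRep.sub (M := M)) := by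
  rintro ⟨_, _⟩ ⟨_, _⟩ rfl
  rfl

variable (M) in
def QuiverSubRep.generatedBy {v : V} (x : M.carrier v) : QuiverSubRep M where
  sub b := Submodule.span K (Set.range fun p : Quiver.Path v b => M.evalPath p x)
  closed α y hy :=
    Submodule.span_mono
      (by rintro _ ⟨_, ⟨p, rfl⟩, rfl⟩; exact ⟨p.cons α, by simp [QuiverRep.evalPath]⟩)
      (Submodule.apply_mem_span_image_of_mem_span (M.map α) hy)

theorem QuiverSubRep.generatedBy_sub_self {v : V} (hv : ∀ p : Quiver.Path v v, p = .nil)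
    (x : M.carrier v) : (generatedBy M x).sub v = K ∙ x := by
  have : (Set.range fun p : Quiver.Path v v => M.evalPath p x) = {x} := by
    refine Set.eq_singleton_iff_unique_mem.mpr ⟨⟨.nil, by simp [QuiverRep.evalPath]⟩, ?_⟩
    rintro _ ⟨p, rfl⟩
    simp [hv p, QuiverRep.evalPath]
  exact congrArg (Submodule.span K) this

theorem QuiverSubRep.finrank_le_one_of_finite [Infinite K] [Finite (QuiverSubRep M)] {v : V}
    (hv : ∀ p : Quiver.Path v v, p = .nil) : Module.finrank K (M.carrier v) ≤ 1 := by
  by_contra! h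
  refine Submodule.infinite_range_span_singleton h
    ((Set.finite_range fun N : QuiverSubRep M => N.sub v).subset ?_)
  rintro _ ⟨x, rfl⟩
  exact ⟨generatedBy M x, generatedBy_sub_self hv x⟩

theorem QuiverSubRep.finite_of_finrank_le_one [Finite V] [∀ v, FiniteDimensional K (M.carrier v)]
    (h : ∀ v, Module.finrank K (M.carrier v) ≤ 1) : Finite (QuiverSubRep M) :=
  have := fun v => Submodule.finite_of_finrank_le_one (h v)
  .of_injective _ sub_injective

end Subrepresentations

theorem stmt_18_general (hK : Infinite K) (hV : Finite V)
    (hacyclic : ∀ (a : V) (p : Quiver.Path a a), p = Quiver.Path.nil)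
    (M : QuiverRep K V) (hfd : ∀ v, FiniteDimensional K (M.carrier v)) :
    Finite (QuiverSubRep M) ↔ ∀ v : V, Module.finrank K (M.carrier v) ≤ 1 :=
  ⟨fun _ v => QuiverSubRep.finrank_le_one_of_finite (hacyclic v),
    QuiverSubRep.finite_of_finrank_le_one⟩

/-- Let `Q` be a finite acyclic quiver, `K` an infinite field, `I` an admissible
ideal of `KQ` (given by a set of relations, each a combination of parallel paths of
length ≥ 2), and `M` a finite-dimensional representation bound by `I`. Then `M` has
finitely many subrepresentations if and only if `M` is thin. -/
theorem stmt_18 (hK : Infinite K) (hV : Finite V) (hA : ∀ a b : V, Finite (a ⟶ b))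
    (hacyclic : ∀ (a : V) (p : Quiver.Path a a), p = Quiver.Path.nil)
    (I : ∀ a b : V, Set (Quiver.Path a b →₀ K))
    (hadm : ∀ (a b : V), ∀ c ∈ I a b, ∀ p ∈ c.support, 2 ≤ p.length)
    (M : QuiverRep K V) (hfd : ∀ v, FiniteDimensional K (M.carrier v))
    (hbound : ∀ (a b : V), ∀ c ∈ I a b, M.Satisfies c) :
    Finite (QuiverSubRep M) ↔ ∀ v : V, Module.finrank K (M.carrier v) ≤ 1 :=
  stmt_18_general hK hV hacyclic M hfd
end
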